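/- Let I ⊆ (0,∞) be an open interval, let ζ, B : ℝ → ℝ be twice continuously differentiable on I with ζ(r) ≠ 0 and B(r) ≠ 0 for all r ∈ I, and suppose that for all r ∈ I: B''(r) − B'(r)/r − 2(ζ'(r)/ζ(r))²B(r) = 0. Fix r₀ ∈ I and σ, ε ∈ ℝ, and define Z : I → ℝ by Z(r) = σ + ε ∫_{r₀}^{r} s/B(s)² ds. Then (ζ, B·Z) satisfies the same equation on I, i.e. (B·Z)''(r) − (B·Z)'(r)/r − 2(ζ'(r)/ζ(r))²(B·Z)(r) = 0 for all r ∈ I. -/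

import Mathlib

/-!
Reduction of order. For any nonvanishing `B` and any `Z` with `Z' = ε r / B²`, expanding
`(B Z)''` and `(B Z)'` gives `L[B Z] = Z · L[B]` for `L[y] = y'' − y'/r − q y`, whatever `q` is:
the terms in `Z'` and `Z''` cancel because `r` solves the Wronskian equation `W' = W / r`
of `L`. Hence `L[B] = 0` forces `L[B Z] = 0`.
-/

open Set Filter Topology

theorem hasDerivAt_integral_of_continuousOn {s : Set ℝ} {g : ℝ → ℝ} {r₀ x : ℝ}
    (hs : IsOpen s) (hs' : OrdConnected s) (hg : ContinuousOn g s) (hr₀ : r₀ ∈ s) (hx : x ∈ s) :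
    HasDerivAt (fun y => ∫ t in r₀..y, g t) (g x) x :=
  intervalIntegral.integral_hasDerivAt_right
    ((hg.mono (hs'.uIcc_subset hr₀ hx)).intervalIntegrable)
    (hg.stronglyMeasurableAtFilter hs x hx) (hg.continuousAt (hs.mem_nhds hx))

theorem deriv_deriv_mul_sub_div_eq {s : Set ℝ} {B Z : ℝ → ℝ} {c x : ℝ}
    (hs : IsOpen s) (hB : ContDiffOn ℝ 2 B s)
    (hZ : ∀ y ∈ s, HasDerivAt Z (c * y / B y ^ 2) y) (hx : x ∈ s) (hBx : B x ≠ 0) (hx0 : x ≠ 0) :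
    deriv (deriv fun y => B y * Z y) x - deriv (fun y => B y * Z y) x / x
      = Z x * (deriv (deriv B) x - deriv B x / x) := by
  have hB1 : ∀ y ∈ s, HasDerivAt B (deriv B y) y := fun y hy =>
    ((hB.differentiableOn two_ne_zero).differentiableAt (hs.mem_nhds hy)).hasDerivAt
  have hB2 : HasDerivAt (deriv B) (deriv (deriv B) x) x :=
    (((hB.deriv_of_isOpen hs (by norm_num)).differentiableOn one_ne_zero).differentiableAt
      (hs.mem_nhds hx)).hasDerivAt
  have hBZ : ∀ y ∈ s,
      HasDerivAt (fun y => B y * Z y) (deriv B y * Z y + B y * (c * y / B y ^ 2)) y :=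
    fun y hy => (hB1 y hy).mul (hZ y hy)
  have hBZ' : deriv (fun y => B y * Z y) =ᶠ[𝓝 x]
      fun y => deriv B y * Z y + B y * (c * y / B y ^ 2) :=
    eventually_of_mem (hs.mem_nhds hx) fun y hy => (hBZ y hy).deriv
  have hBZ'' : HasDerivAt (fun y => deriv B y * Z y + B y * (c * y / B y ^ 2)) _ x :=
    (hB2.mul (hZ x hx)).add
      ((hB1 x hx).mul (((hasDerivAt_id' x).const_mul c).div ((hB1 x hx).pow 2)
        (pow_ne_zero 2 hBx)))
  rw [hBZ'.deriv_eq, hBZ''.deriv, (hBZ x hx).deriv]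
  field_simp
  ring

theorem isotropic_two_general
    (a b : ℝ) (hab : 0 < a) (ζ B : ℝ → ℝ)
    (hB : ContDiffOn ℝ 2 B (Set.Ioo a b))
    (hB0 : ∀ r ∈ Set.Ioo a b, B r ≠ 0)
    (hODE : ∀ r ∈ Set.Ioo a b,
      deriv (deriv B) r - deriv B r / r - 2 * (deriv ζ r / ζ r) ^ 2 * B r = 0)
    (r₀ : ℝ) (hr₀ : r₀ ∈ Set.Ioo a b) (σ ε : ℝ) (Z : ℝ → ℝ)
    (hZ : ∀ r ∈ Set.Ioo a b, Z r = σ + ε * ∫ s in r₀..r, s / (B s) ^ 2) :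
    ∀ r ∈ Set.Ioo a b,
      deriv (deriv (fun x => B x * Z x)) r - deriv (fun x => B x * Z x) r / r
        - 2 * (deriv ζ r / ζ r) ^ 2 * (B r * Z r) = 0 := by
  have hZ' : ∀ x ∈ Ioo a b, HasDerivAt Z (ε * x / B x ^ 2) x := by
    intro x hx
    have hg : ContinuousOn (fun s => s / B s ^ 2) (Ioo a b) :=
      continuousOn_id.div (hB.continuousOn.pow 2) fun y hy => pow_ne_zero 2 (hB0 y hy)
    have hZx : Z =ᶠ[𝓝 x] fun y => σ + ε * ∫ s in r₀..y, s / B s ^ 2 :=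
      eventually_of_mem (isOpen_Ioo.mem_nhds hx) hZ
    rw [mul_div_assoc]
    exact (((hasDerivAt_integral_of_continuousOn isOpen_Ioo ordConnected_Ioo hg hr₀ hx).const_mul
      ε).const_add σ).congr_of_eventuallyEq hZx
  intro r hr
  rw [deriv_deriv_mul_sub_div_eq isOpen_Ioo hB hZ' hr (hB0 r hr) (hab.trans hr.1).ne']
  linear_combination Z r * hODE r hr

/-- **Isotropic 2.**  If `(ζ, B)` satisfies `B'' − B'/r − 2(ζ'/ζ)²B = 0` on an open interval
of positive reals, then so does `(ζ, B·Z)`, where `Z(r) = σ + ε ∫ r/B²`. -/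
theorem isotropic_two
    (a b : ℝ) (hab : 0 < a) (ζ B : ℝ → ℝ)
    (hζ : ContDiffOn ℝ 2 ζ (Set.Ioo a b))
    (hB : ContDiffOn ℝ 2 B (Set.Ioo a b))
    (hζ0 : ∀ r ∈ Set.Ioo a b, ζ r ≠ 0)
    (hB0 : ∀ r ∈ Set.Ioo a b, B r ≠ 0)
    (hODE : ∀ r ∈ Set.Ioo a b,
      deriv (deriv B) r - deriv B r / r - 2 * (deriv ζ r / ζ r) ^ 2 * B r = 0)
    (r₀ : ℝ) (hr₀ : r₀ ∈ Set.Ioo a b) (σ ε : ℝ) (Z : ℝ → ℝ)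
    (hZ : ∀ r ∈ Set.Ioo a b, Z r = σ + ε * ∫ s in r₀..r, s / (B s) ^ 2) :
    ∀ r ∈ Set.Ioo a b,
      deriv (deriv (fun x => B x * Z x)) r - deriv (fun x => B x * Z x) r / r
        - 2 * (deriv ζ r / ζ r) ^ 2 * (B r * Z r) = 0 :=
  isotropic_two_general a b hab ζ B hB hB0 hODE r₀ hr₀ σ ε Z hZ
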